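/- For the quasi-proportional first-price auction with bidders having both ROS and budget constraints: for every alpha ≥ 1, every eta in (0,1), every instance with n bidders, and every equilibrium bid profile, OPT ≤ (1/eta + (n·eta)^{1/alpha} · (alpha − alpha·eta + 1) / (alpha · (1 − eta))) · LW. Consequently, for every ε > 0 and every n there exists alpha_0 ≥ 1 such that for all alpha ≥ alpha_0, every equilibrium satisfies OPT ≤ (2 + ε) · LW; i.e., as alpha → ∞ the price of anarchy of the quasi-proportional first-price auction is at most 2. -/

import Mathlib

open Finset
open scoped Classical

noncomputable section

/-- An allocation: each entry in `[0,1]`, and each query allocated total probability at most 1. -/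
def IsAlloc {n q : ℕ} (π : Fin n → Fin q → ℝ) : Prop :=
  (∀ i j, 0 ≤ π i j) ∧ (∀ i j, π i j ≤ 1) ∧ ∀ j, ∑ i, π i j ≤ 1

/-- An integral (deterministic) allocation. -/
def IsIntegralAlloc {n q : ℕ} (π : Fin n → Fin q → ℝ) : Prop :=
  IsAlloc π ∧ ∀ i j, π i j = 0 ∨ π i j = 1

/-- Liquid welfare of an allocation. -/
def allocLW {n q : ℕ} (B : Fin n → ℝ) (v π : Fin n → Fin q → ℝ) : ℝ :=
  ∑ i, min (B i) (∑ j, π i j * v i j)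

/-- Probability that bidder `i` wins query `j` in the quasi-proportional FPA with parameter `α`. -/
def qpPi {n q : ℕ} (α : ℝ) (b : Fin n → Fin q → ℝ) (i : Fin n) (j : Fin q) : ℝ :=
  if ∀ i', b i' j = 0 then 0
  else b i j ^ α / ∑ i', b i' j ^ α

/-- Expected value of bidder `i`. -/
def qpV {n q : ℕ} (α : ℝ) (v b : Fin n → Fin q → ℝ) (i : Fin n) : ℝ :=
  ∑ j, qpPi α b i j * v i j

/-- Expected spend on query `j`. -/
def qpSpendQ {n q : ℕ} (α : ℝ) (b : Fin n → Fin q → ℝ) (j : Fin q) : ℝ :=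
  ∑ i, qpPi α b i j * b i j

/-- Expected spend of bidder `i`. -/
def qpSpendI {n q : ℕ} (α : ℝ) (b : Fin n → Fin q → ℝ) (i : Fin n) : ℝ :=
  ∑ j, qpPi α b i j * b i j

/-- Liquid welfare of a bid profile in the quasi-proportional FPA. -/
def qpLW {n q : ℕ} (α : ℝ) (B : Fin n → ℝ) (v b : Fin n → Fin q → ℝ) : ℝ :=
  ∑ i, min (B i) (qpV α v b i)

/-- Equilibrium bid profile for the quasi-proportional FPA with ROS and budget constraints. -/
def IsQpEq {n q : ℕ} (α : ℝ) (B : Fin n → ℝ) (v b : Fin n → Fin q → ℝ) : Prop :=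
  (∀ i j, 0 ≤ b i j) ∧
  (∀ i, qpSpendI α b i ≤ min (B i) (qpV α v b i)) ∧
  (∀ i (b' : Fin q → ℝ), (∀ j, 0 ≤ b' j) →
    qpV α v (Function.update b i b') i ≤ qpV α v b i ∨
    min (B i) (qpV α v (Function.update b i b') i)
      < qpSpendI α (Function.update b i b') i)


/-!
Fix an optimal allocation `π` and `η ∈ (0,1)`. Bidder `i` can deviate to bids that win each
query `j` with probability `η π_ij`: against `T_j = ∑_{i' ≠ i} b_{i'j}^α` this is the bid
`(η π_ij / (1 - η π_ij) · T_j)^(1/α)`, and the power-mean inequality gives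
`T_j^(1/α) ≤ n^(1/α) · Spend(j)`, so the deviation costs at most
`η (nη/(1-η))^(1/α) ∑_j π_ij Spend(j)`. The equilibrium condition then bounds
`η · min(B_i, V*_i)` by `min(B_i, V_i)` plus that cost. Summing over bidders, and using that the
total spend is at most the liquid welfare, gives `OPT ≤ (1/η + (nη/(1-η))^(1/α)) · LW`.
Bernoulli's inequality turns this into the stated constant; for `η = 2/(2+ε)` the constant tends
to `1/η + 1 = 2 + ε/2` as `α → ∞`.
-/

-- The power-mean inequality for the exponent `1 + 1 / α`, applied to `f ^ α`.
theorem Real.rpow_one_div_sum_rpow_mul_le {ι : Type*} (s : Finset ι) {f : ι → ℝ} {α : ℝ}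
    (hα : 0 < α) (hf : ∀ i ∈ s, 0 ≤ f i) :
    (∑ i ∈ s, f i ^ α) ^ (1 / α) * ∑ i ∈ s, f i ^ α ≤
      (#s : ℝ) ^ (1 / α) * ∑ i ∈ s, f i ^ (α + 1) := by
  have hS : 0 ≤ ∑ i ∈ s, f i ^ α := sum_nonneg fun i hi => Real.rpow_nonneg (hf i hi) _
  have h := Real.rpow_sum_le_const_mul_sum_rpow_of_nonneg s (p := 1 / α + 1)
    (by have := hα.le; simp only [le_add_iff_nonneg_left]; positivity)
    fun i hi => Real.rpow_nonneg (hf i hi) α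
  rw [Real.rpow_add' hS (by positivity), Real.rpow_one, add_sub_cancel_right] at h
  convert h using 3 with i hi
  rw [← Real.rpow_mul (hf i hi), mul_add, mul_one_div_cancel hα.ne', mul_one, add_comm]

theorem Real.one_div_one_sub_rpow_le {η α : ℝ} (hα : 1 ≤ α) (hη0 : 0 ≤ η) (hη1 : η < 1) :
    (1 / (1 - η)) ^ (1 / α) ≤ (α - α * η + 1) / (α * (1 - η)) := by
  have hα0 : 0 < α := by linarith
  have h1η : 0 < 1 - η := by linarith
  calc (1 / (1 - η)) ^ (1 / α) = (1 + η / (1 - η)) ^ (1 / α) := by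
        congr 1; field_simp; ring
    _ ≤ 1 + 1 / α * (η / (1 - η)) :=
        rpow_one_add_le_one_add_mul_self (by linarith [div_nonneg hη0 h1η.le])
          (by positivity) ((div_le_one hα0).2 hα)
    _ ≤ (α - α * η + 1) / (α * (1 - η)) := by
        rw [le_div_iff₀ (by positivity)]
        field_simp
        nlinarith

theorem Real.tendsto_rpow_one_div_atTop {c : ℝ} (hc : 0 < c) :
    Filter.Tendsto (fun α : ℝ => c ^ (1 / α)) Filter.atTop (nhds 1) := by
  have h := ((Real.continuousAt_const_rpow hc.ne' (b := 0)).tendsto).comp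
    (tendsto_const_nhds.div_atTop Filter.tendsto_id : Filter.Tendsto (fun α : ℝ => 1 / α) _ _)
  simpa [Function.comp_def] using h

theorem Real.exists_rpow_one_div_le {c ε : ℝ} (hc : 0 ≤ c) (hε : 0 < ε) :
    ∃ α₀ : ℝ, 1 ≤ α₀ ∧ ∀ α : ℝ, α₀ ≤ α → c ^ (1 / α) ≤ 1 + ε := by
  obtain ⟨a, ha⟩ := Filter.eventually_atTop.1 <|
    (Real.tendsto_rpow_one_div_atTop (by linarith : 0 < c + 1)).eventually_lt_const
      (by linarith : (1 : ℝ) < 1 + ε)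
  refine ⟨max a 1, le_max_right _ _, fun α hα => ?_⟩
  have hα1 : 1 ≤ α := (le_max_right _ _).trans hα
  calc c ^ (1 / α) ≤ (c + 1) ^ (1 / α) := Real.rpow_le_rpow hc (by linarith) (by positivity)
    _ ≤ 1 + ε := (ha α ((le_max_left _ _).trans hα)).le

section QuasiProportional

variable {n q : ℕ} {α : ℝ} {b : Fin n → Fin q → ℝ}

theorem qpPi_nonneg (hb : ∀ i j, 0 ≤ b i j) (i : Fin n) (j : Fin q) : 0 ≤ qpPi α b i j := by
  unfold qpPi
  split_ifs
  · exact le_rfl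
  · exact div_nonneg (Real.rpow_nonneg (hb i j) _)
      (sum_nonneg fun i' _ => Real.rpow_nonneg (hb i' j) _)

theorem qpSpendQ_nonneg (hb : ∀ i j, 0 ≤ b i j) (j : Fin q) : 0 ≤ qpSpendQ α b j :=
  sum_nonneg fun i _ => mul_nonneg (qpPi_nonneg hb i j) (hb i j)

theorem qpSpendI_nonneg (hb : ∀ i j, 0 ≤ b i j) (i : Fin n) : 0 ≤ qpSpendI α b i :=
  sum_nonneg fun j _ => mul_nonneg (qpPi_nonneg hb i j) (hb i j)

-- When all bids on `j` vanish, both sides are `0`, the right one as `0 / 0`.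
theorem qpPi_eq_div (hα : α ≠ 0) (i : Fin n) (j : Fin q) :
    qpPi α b i j = b i j ^ α / ∑ i', b i' j ^ α := by
  unfold qpPi
  split_ifs with h
  · simp [h, Real.zero_rpow hα]
  · rfl

theorem qpSpendQ_eq_div (hα : 0 < α) (hb : ∀ i j, 0 ≤ b i j) (j : Fin q) :
    qpSpendQ α b j = (∑ i, b i j ^ (α + 1)) / ∑ i, b i j ^ α := by
  simp only [qpSpendQ, qpPi_eq_div hα.ne', sum_div, div_mul_eq_mul_div,
    Real.rpow_add_one' (hb _ j) (by positivity : α + 1 ≠ 0)]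

theorem sum_qpSpendQ_eq_sum_qpSpendI : ∑ j, qpSpendQ α b j = ∑ i, qpSpendI α b i :=
  sum_comm

theorem rpow_one_div_sum_rpow_le_qpSpendQ (hα : 0 < α) (hb : ∀ i j, 0 ≤ b i j) (j : Fin q) :
    (∑ i, b i j ^ α) ^ (1 / α) ≤ (n : ℝ) ^ (1 / α) * qpSpendQ α b j := by
  have hS : 0 ≤ ∑ i, b i j ^ α := sum_nonneg fun i _ => Real.rpow_nonneg (hb i j) _
  rcases hS.eq_or_lt with hS | hS
  · rw [← hS, Real.zero_rpow (by positivity)]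
    exact mul_nonneg (by positivity) (qpSpendQ_nonneg hb j)
  rw [qpSpendQ_eq_div hα hb, mul_div_assoc', le_div_iff₀ hS]
  simpa using Real.rpow_one_div_sum_rpow_mul_le univ hα fun i _ => hb i j

def othersPow (α : ℝ) (b : Fin n → Fin q → ℝ) (i : Fin n) (j : Fin q) : ℝ :=
  ∑ i' ∈ univ.erase i, b i' j ^ α

theorem othersPow_nonneg (hb : ∀ i j, 0 ≤ b i j) (i : Fin n) (j : Fin q) :
    0 ≤ othersPow α b i j :=
  sum_nonneg fun i' _ => Real.rpow_nonneg (hb i' j) _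

theorem othersPow_le_sum (hb : ∀ i j, 0 ≤ b i j) (i : Fin n) (j : Fin q) :
    othersPow α b i j ≤ ∑ i', b i' j ^ α :=
  sum_le_sum_of_subset_of_nonneg (erase_subset _ _) fun i' _ _ => Real.rpow_nonneg (hb i' j) _

theorem qpPi_update_self (hα : α ≠ 0) (i : Fin n) (x : Fin q → ℝ) (j : Fin q) :
    qpPi α (Function.update b i x) i j = x j ^ α / (x j ^ α + othersPow α b i j) := by
  rw [qpPi_eq_div hα, ← add_sum_erase _ _ (mem_univ i), Function.update_self]
  congr 2
  exact sum_congr rfl fun i' hi' => by rw [Function.update_of_ne (ne_of_mem_erase hi')]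

-- The bid on `j` that wins it with probability `p j` against the others' bids; a query no one
-- else bids on is won outright by any bid `δ > 0`.
def targetBid (α δ : ℝ) (p : Fin q → ℝ) (b : Fin n → Fin q → ℝ) (i : Fin n) (j : Fin q) : ℝ :=
  if othersPow α b i j = 0 then δ else (p j / (1 - p j) * othersPow α b i j) ^ (1 / α)

variable {δ : ℝ} {p : Fin q → ℝ}

theorem targetBid_nonneg (hb : ∀ i j, 0 ≤ b i j) (hδ : 0 < δ) (hp0 : ∀ j, 0 ≤ p j)
    (hp1 : ∀ j, p j < 1) (i : Fin n) (j : Fin q) : 0 ≤ targetBid α δ p b i j := by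
  unfold targetBid
  split_ifs
  · exact hδ.le
  · have := hp0 j; have := sub_pos.2 (hp1 j); have := othersPow_nonneg (α := α) hb i j
    positivity

theorem qpPi_update_targetBid (hα : 0 < α) (hb : ∀ i j, 0 ≤ b i j) (hδ : 0 < δ)
    (hp0 : ∀ j, 0 ≤ p j) (hp1 : ∀ j, p j < 1) (i : Fin n) (j : Fin q) :
    qpPi α (Function.update b i (targetBid α δ p b i)) i j =
      if othersPow α b i j = 0 then 1 else p j := by
  rw [qpPi_update_self hα.ne']
  unfold targetBid
  split_ifs with hT
  · rw [hT, add_zero, div_self (Real.rpow_pos_of_pos hδ α).ne']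
  · have hTpos : 0 < othersPow α b i j := (othersPow_nonneg hb i j).lt_of_ne' hT
    have h1p : 0 < 1 - p j := sub_pos.2 (hp1 j)
    rw [← Real.rpow_mul (by have := hp0 j; positivity), one_div_mul_cancel hα.ne', Real.rpow_one]
    field_simp
    ring

theorem qpPi_update_targetBid_mul_le (hα : 0 < α) (hb : ∀ i j, 0 ≤ b i j) (hδ : 0 < δ)
    (hp0 : ∀ j, 0 ≤ p j) {η : ℝ} (hpη : ∀ j, p j ≤ η) (hη1 : η < 1) (i : Fin n) (j : Fin q) :
    qpPi α (Function.update b i (targetBid α δ p b i)) i j * targetBid α δ p b i j ≤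
      p j * ((n : ℝ) * η / (1 - η)) ^ (1 / α) * qpSpendQ α b j + δ := by
  have hp1 : ∀ j, p j < 1 := fun j => (hpη j).trans_lt hη1
  have hη0 : 0 ≤ η := (hp0 j).trans (hpη j)
  have h1η := sub_pos.2 hη1
  have hspend := qpSpendQ_nonneg (α := α) hb j
  rw [qpPi_update_targetBid hα hb hδ hp0 hp1]
  unfold targetBid
  split_ifs with hT
  · rw [one_mul, le_add_iff_nonneg_left]
    exact mul_nonneg (mul_nonneg (hp0 j) (Real.rpow_nonneg (by positivity) _)) hspend
  · set T := othersPow α b i j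
    have hT0 : 0 ≤ T := othersPow_nonneg hb i j
    have hratio : p j / (1 - p j) ≤ η / (1 - η) :=
      div_le_div₀ hη0 (hpη j) h1η (by linarith [hpη j])
    have hTpow : T ^ (1 / α) ≤ (n : ℝ) ^ (1 / α) * qpSpendQ α b j :=
      (Real.rpow_le_rpow hT0 (othersPow_le_sum hb i j) (by positivity)).trans
        (rpow_one_div_sum_rpow_le_qpSpendQ hα hb j)
    have hp := hp0 j
    have h1p := sub_pos.2 (hp1 j)
    calc p j * (p j / (1 - p j) * T) ^ (1 / α)
        = p j * ((p j / (1 - p j)) ^ (1 / α) * T ^ (1 / α)) := by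
          rw [Real.mul_rpow (by positivity) hT0]
      _ ≤ p j * ((η / (1 - η)) ^ (1 / α) * ((n : ℝ) ^ (1 / α) * qpSpendQ α b j)) := by
          gcongr
      _ = p j * ((n : ℝ) * η / (1 - η)) ^ (1 / α) * qpSpendQ α b j := by
          rw [mul_div_assoc, Real.mul_rpow (by positivity) (by positivity)]
          ring
      _ ≤ _ := le_add_of_nonneg_right hδ.le

end QuasiProportional

namespace IsQpEq

variable {n q : ℕ} {α : ℝ} {B : Fin n → ℝ} {v b : Fin n → Fin q → ℝ}

theorem min_nonneg (heq : IsQpEq α B v b) (i : Fin n) : 0 ≤ min (B i) (qpV α v b i) :=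
  (qpSpendI_nonneg heq.1 i).trans (heq.2.1 i)

theorem budget_nonneg (heq : IsQpEq α B v b) (i : Fin n) : 0 ≤ B i :=
  (heq.min_nonneg i).trans (min_le_left _ _)

theorem qpLW_nonneg (heq : IsQpEq α B v b) : 0 ≤ qpLW α B v b :=
  sum_nonneg fun i _ => heq.min_nonneg i

theorem min_update_le (heq : IsQpEq α B v b) (i : Fin n) {b' : Fin q → ℝ}
    (hb' : ∀ j, 0 ≤ b' j) :
    min (B i) (qpV α v (Function.update b i b') i) ≤
      min (B i) (qpV α v b i) + qpSpendI α (Function.update b i b') i := by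
  have hupdate : ∀ i' j, 0 ≤ Function.update b i b' i' j := fun i' j => by
    rcases eq_or_ne i' i with rfl | h
    · simpa using hb' j
    · simpa [h] using heq.1 i' j
  have hspend := qpSpendI_nonneg (α := α) hupdate i
  rcases heq.2.2 i b' hb' with h | h
  · linarith [min_le_min_left (B i) h]
  · linarith [heq.min_nonneg i]

theorem sum_sum_mul_qpSpendQ_le_qpLW (heq : IsQpEq α B v b) {π : Fin n → Fin q → ℝ}
    (hπ : IsAlloc π) : ∑ i, ∑ j, π i j * qpSpendQ α b j ≤ qpLW α B v b :=
  calc ∑ i, ∑ j, π i j * qpSpendQ α b j = ∑ j, (∑ i, π i j) * qpSpendQ α b j := by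
        rw [sum_comm]; simp only [sum_mul]
    _ ≤ ∑ j, qpSpendQ α b j :=
        sum_le_sum fun j _ => mul_le_of_le_one_left (qpSpendQ_nonneg heq.1 j) (hπ.2.2 j)
    _ = ∑ i, qpSpendI α b i := sum_qpSpendQ_eq_sum_qpSpendI
    _ ≤ qpLW α B v b := sum_le_sum fun i _ => heq.2.1 i

-- The deviation targets winning probability `η * π i j` on every query `j`.
theorem mul_min_le (heq : IsQpEq α B v b) (hα : 0 < α) {η : ℝ} (hη0 : 0 < η) (hη1 : η < 1)
    (hv : ∀ i j, 0 ≤ v i j) {π : Fin n → Fin q → ℝ} (hπ : IsAlloc π) (i : Fin n) :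
    η * min (B i) (∑ j, π i j * v i j) ≤ min (B i) (qpV α v b i) +
      η * ((n : ℝ) * η / (1 - η)) ^ (1 / α) * ∑ j, π i j * qpSpendQ α b j := by
  refine le_of_forall_pos_le_add fun ε hε => ?_
  set C := ((n : ℝ) * η / (1 - η)) ^ (1 / α)
  set p : Fin q → ℝ := fun j => η * π i j
  have hp0 : ∀ j, 0 ≤ p j := fun j => mul_nonneg hη0.le (hπ.1 i j)
  have hpη : ∀ j, p j ≤ η := fun j => mul_le_of_le_one_right hη0.le (hπ.2.1 i j)
  have hp1 : ∀ j, p j < 1 := fun j => (hpη j).trans_lt hη1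
  set δ := ε / (q + 1)
  have hδ : 0 < δ := by positivity
  have hqδ : q * δ ≤ ε := by
    rw [mul_div_assoc', div_le_iff₀ (by positivity)]; nlinarith
  set b' := targetBid α δ p b i
  have hvalue : η * ∑ j, π i j * v i j ≤ qpV α v (Function.update b i b') i := by
    rw [mul_sum]
    refine sum_le_sum fun j _ => ?_
    rw [← mul_assoc]
    refine mul_le_mul_of_nonneg_right ?_ (hv i j)
    rw [qpPi_update_targetBid hα heq.1 hδ hp0 hp1]
    split_ifs
    exacts [(hp1 j).le, le_rfl]
  have hspend :
      qpSpendI α (Function.update b i b') i ≤ η * C * ∑ j, π i j * qpSpendQ α b j + ε :=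
    calc qpSpendI α (Function.update b i b') i
        ≤ ∑ j, (p j * C * qpSpendQ α b j + δ) := by
          refine sum_le_sum fun j _ => ?_
          rw [Function.update_self]
          exact qpPi_update_targetBid_mul_le hα heq.1 hδ hp0 hpη hη1 i j
      _ = η * C * ∑ j, π i j * qpSpendQ α b j + q * δ := by
          simp only [sum_add_distrib, sum_const, card_univ, Fintype.card_fin, nsmul_eq_mul,
            mul_sum, p]
          rw [add_left_inj]
          exact sum_congr rfl fun j _ => by ring
      _ ≤ _ := by linarith
  calc η * min (B i) (∑ j, π i j * v i j) = min (η * B i) (η * ∑ j, π i j * v i j) :=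
        mul_min_of_nonneg _ _ hη0.le
    _ ≤ min (B i) (qpV α v (Function.update b i b') i) :=
        min_le_min (mul_le_of_le_one_left (heq.budget_nonneg i) hη1.le) hvalue
    _ ≤ min (B i) (qpV α v b i) + qpSpendI α (Function.update b i b') i :=
        heq.min_update_le i (targetBid_nonneg heq.1 hδ hp0 hp1 i)
    _ ≤ _ := by linarith

theorem allocLW_le (heq : IsQpEq α B v b) (hα : 0 < α) {η : ℝ} (hη0 : 0 < η) (hη1 : η < 1)
    (hv : ∀ i j, 0 ≤ v i j) {π : Fin n → Fin q → ℝ} (hπ : IsAlloc π) :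
    allocLW B v π ≤ (1 / η + ((n : ℝ) * η / (1 - η)) ^ (1 / α)) * qpLW α B v b := by
  set C := ((n : ℝ) * η / (1 - η)) ^ (1 / α)
  have hC : 0 ≤ C := Real.rpow_nonneg (by have := sub_pos.2 hη1; positivity) _
  have hsum : η * allocLW B v π ≤ qpLW α B v b + η * C * ∑ i, ∑ j, π i j * qpSpendQ α b j := by
    rw [allocLW, mul_sum, mul_sum, qpLW, ← sum_add_distrib]
    exact sum_le_sum fun i _ => heq.mul_min_le hα hη0 hη1 hv hπ i
  have hspend := mul_le_mul_of_nonneg_left (heq.sum_sum_mul_qpSpendQ_le_qpLW hπ)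
    (mul_nonneg hη0.le hC)
  refine le_of_mul_le_mul_left ?_ hη0
  calc η * allocLW B v π ≤ qpLW α B v b + η * C * qpLW α B v b := by linarith
    _ = η * ((1 / η + C) * qpLW α B v b) := by field_simp

end IsQpEq

/-- PoA bound for the quasi-proportional FPA. First, for every `α ≥ 1` and
`η ∈ (0,1)`, every equilibrium of the quasi-proportional FPA with ROS and budget constraints
satisfies `OPT ≤ (1/η + (nη)^{1/α}(α - αη + 1)/(α(1-η))) * LW`. Consequently, for every
`ε > 0` and every `n`, for all sufficiently large `α` every equilibrium satisfies
`OPT ≤ (2 + ε) * LW`: as `α → ∞` the PoA is at most 2. -/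
theorem stmt19 :
    (∀ (α : ℝ), 1 ≤ α → ∀ (η : ℝ), 0 < η → η < 1 →
      ∀ (n q : ℕ) (B : Fin n → ℝ) (v b : Fin n → Fin q → ℝ),
        (∀ i, 0 < B i) → (∀ i j, 0 ≤ v i j) → IsQpEq α B v b →
        ∀ OPT : ℝ,
          IsGreatest {w : ℝ | ∃ π : Fin n → Fin q → ℝ, IsAlloc π ∧ w = allocLW B v π} OPT →
          OPT ≤ (1 / η + ((n : ℝ) * η) ^ (1 / α) * (α - α * η + 1) / (α * (1 - η)))
                * qpLW α B v b) ∧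
    (∀ ε : ℝ, 0 < ε → ∀ n : ℕ, ∃ α₀ : ℝ, 1 ≤ α₀ ∧ ∀ α : ℝ, α₀ ≤ α →
      ∀ (q : ℕ) (B : Fin n → ℝ) (v b : Fin n → Fin q → ℝ),
        (∀ i, 0 < B i) → (∀ i j, 0 ≤ v i j) → IsQpEq α B v b →
        ∀ OPT : ℝ,
          IsGreatest {w : ℝ | ∃ π : Fin n → Fin q → ℝ, IsAlloc π ∧ w = allocLW B v π} OPT →
          OPT ≤ (2 + ε) * qpLW α B v b) := by
  refine ⟨fun α hα η hη0 hη1 n q B v b _ hv heq OPT hOPT => ?_, fun ε hε n => ?_⟩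
  · obtain ⟨⟨π, hπ, rfl⟩, -⟩ := hOPT
    refine (heq.allocLW_le (by linarith) hη0 hη1 hv hπ).trans
      (mul_le_mul_of_nonneg_right ?_ heq.qpLW_nonneg)
    have h1η := sub_pos.2 hη1
    calc 1 / η + ((n : ℝ) * η / (1 - η)) ^ (1 / α)
        = 1 / η + ((n : ℝ) * η) ^ (1 / α) * (1 / (1 - η)) ^ (1 / α) := by
          rw [div_eq_mul_one_div _ (1 - η), Real.mul_rpow (by positivity) (by positivity)]
      _ ≤ 1 / η + ((n : ℝ) * η) ^ (1 / α) * ((α - α * η + 1) / (α * (1 - η))) := by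
          gcongr
          exact Real.one_div_one_sub_rpow_le hα hη0.le hη1
      _ = _ := by rw [mul_div_assoc]
  · set η := 2 / (2 + ε)
    have hη0 : 0 < η := by positivity
    have hη1 : η < 1 := (div_lt_one (by linarith)).2 (by linarith)
    have hη_inv : 1 / η = 1 + ε / 2 := by rw [one_div_div]; ring
    obtain ⟨α₀, hα₀, hle⟩ := Real.exists_rpow_one_div_le
      (by have := sub_pos.2 hη1; positivity : (0 : ℝ) ≤ n * η / (1 - η)) (half_pos hε)
    refine ⟨α₀, hα₀, fun α hα q B v b _ hv heq OPT hOPT => ?_⟩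
    obtain ⟨⟨π, hπ, rfl⟩, -⟩ := hOPT
    refine (heq.allocLW_le (by linarith) hη0 hη1 hv hπ).trans
      (mul_le_mul_of_nonneg_right ?_ heq.qpLW_nonneg)
    linarith [hle α hα]
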